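/- Suppose the optimal routing step function r*(y) takes value a_k on the interval [τ_{k-1}, τ_k), where the sampling water level for route a_k is β_k = Λ - μ_{a_k} with Λ = λ* + c*E_max, and suppose that at y = τ_k the newly optimal route a_{k+1} satisfies μ_{a_{k+1}} < μ_{a_k} and that the derivative identity dQ(y,a_k)/dy = Λ - y holds for y < β_k. Then β_k < τ_k for every k ≤ K, where K+1 is the number of route segments. -/

import Mathlib

/-! Below its water level `Λ - μ` the action value of a route equals `Λ y - y²/2` plus a
route-dependent constant, so two routes whose levels both exceed `τ` differ by a constant on
`[0, τ]`: they cannot be strictly ordered at `0` and cross at `τ`. -/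

theorem neg_sq_max_div_two_add_eq_of_le {Λ μ c y : ℝ} (hy : y ≤ Λ - μ) :
    -(max 0 (Λ - μ - y)) ^ 2 / 2 + y * μ + c = Λ * y - y ^ 2 / 2 + (c - (Λ - μ) ^ 2 / 2) := by
  rw [max_eq_right (by linarith)]
  ring

theorem stmt7_general (Λ : ℝ) (μ c : ℕ → ℝ) (ak ak1 : ℕ) (τ : ℝ)
    (hμ : μ ak1 < μ ak) (hτ : 0 < τ)
    (Q : ℝ → ℕ → ℝ)
    (hQ : ∀ y r, Q y r = -(max 0 (Λ - μ r - y)) ^ 2 / 2 + y * μ r + c r)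
    (hcross : Q τ ak = Q τ ak1)
    (hopt : ∀ y, 0 ≤ y → y < τ → Q y ak < Q y ak1) :
    Λ - μ ak < τ := by
  by_contra! hβ
  have hQ_of_le : ∀ y r, y ≤ Λ - μ r → Q y r = Λ * y - y ^ 2 / 2 + (c r - (Λ - μ r) ^ 2 / 2) :=
    fun y r hy => (hQ y r).trans (neg_sq_max_div_two_add_eq_of_le hy)
  have h0 := hopt 0 le_rfl hτ
  rw [hQ_of_le 0 ak (by linarith), hQ_of_le 0 ak1 (by linarith)] at h0
  rw [hQ_of_le τ ak hβ, hQ_of_le τ ak1 (by linarith)] at hcross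
  linarith

/-- The sampling threshold lies strictly below the routing threshold: if the
action values `Q(y,r) = -((Λ - μ_r - y)⁺)²/2 + yμ_r + c_r` of routes `a_k` and
`a_{k+1}` (with `μ_{a_{k+1}} < μ_{a_k}`) cross at `τ_k > 0` while route `a_k` is
strictly better below `τ_k`, then `β_k = Λ - μ_{a_k} < τ_k`. -/
theorem stmt7 (Λ : ℝ) (μ c : ℕ → ℝ) (ak ak1 : ℕ) (τ : ℝ)
    (hμpos : ∀ r, 0 < μ r) (hμ : μ ak1 < μ ak) (hτ : 0 < τ)
    (Q : ℝ → ℕ → ℝ)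
    (hQ : ∀ y r, Q y r = -(max 0 (Λ - μ r - y)) ^ 2 / 2 + y * μ r + c r)
    (hcross : Q τ ak = Q τ ak1)
    (hopt : ∀ y, 0 ≤ y → y < τ → Q y ak < Q y ak1) :
    Λ - μ ak < τ :=
  stmt7_general Λ μ c ak ak1 τ hμ hτ Q hQ hcross hopt
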